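/- For all x, y, z > 0 and parameters β, μ_x, μ_y, μ_z, σ_x, σ_y, σ_z > 0, α ∈ (0,1), and a function φ : ℝ≥0 → ℝ≥0 with φ(x) ≤ 1 for all x, the expression L V = β y - φ(x)x - μ_x x - (β y)/x + φ(x) + μ_x + φ(x)x - μ_y y - y z - (φ(x)x)/y + μ_y + z + α z y - μ_z z - y + μ_z + σ_x²/2 + σ_y²/2 + σ_z²/2 satisfies L V ≤ c₁·V(x,y,z) + c₂, where V(x,y,z) = (x-1-ln x)+(y-1-ln y)+(z-1-ln z), c₁ = 2·max(1,β) and c₂ = 6·max(1,β) + (σ_x²+σ_y²+σ_z²)/2 + μ_x + μ_y + μ_z + 1. -/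

import Mathlib

/-!
Every term of `L V` that can be negative is dropped, leaving `β y + z + φ(x) + μ_x + μ_y + μ_z + σ²/2`
(here `α ≤ 1` absorbs `α y z` into `- y z`). Since `log t ≤ t / 2`, each linear term is controlled by
the Lyapunov function: `t ≤ 2 (t - 1 - log t) + 2`; the `x`-summand of `V` is nonnegative and only
enlarges the right-hand side.
-/

open Real

/-- The one-dimensional summand of the Lyapunov function `V`. -/
noncomputable def lyapunov (t : ℝ) : ℝ := t - 1 - log t

lemma lyapunov_nonneg {t : ℝ} (ht : 0 < t) : 0 ≤ lyapunov t := by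
  have := log_le_sub_one_of_pos ht
  unfold lyapunov; linarith

lemma log_le_half_self {t : ℝ} (ht : 0 < t) : log t ≤ t / 2 := by
  have h_half := log_le_sub_one_of_pos (half_pos ht)
  have h_two := log_le_sub_one_of_pos two_pos
  rw [log_div ht.ne' two_ne_zero] at h_half
  linarith

lemma self_le_two_mul_lyapunov_add_two {t : ℝ} (ht : 0 < t) : t ≤ 2 * lyapunov t + 2 := by
  have := log_le_half_self ht
  unfold lyapunov; linarith

lemma mul_le_two_mul_mul_lyapunov_add {c t : ℝ} (hc : 0 ≤ c) (ht : 0 < t) :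
    c * t ≤ 2 * c * lyapunov t + 2 * c := by
  nlinarith [self_le_two_mul_lyapunov_add_two ht]

theorem stmt_2_general (β μx μy μz σx σy σz α : ℝ)
    (hβ : 0 < β) (hμx : 0 < μx) (hμy : 0 < μy) (hμz : 0 < μz)
    (hα : α ∈ Set.Ioo (0 : ℝ) 1)
    (φ : ℝ → ℝ) (hφ0 : ∀ x, 0 ≤ φ x) (hφ1 : ∀ x, φ x ≤ 1)
    (x y z : ℝ) (hx : 0 < x) (hy : 0 < y) (hz : 0 < z) :
    β * y - φ x * x - μx * x - β * y / x + φ x + μx + φ x * x - μy * y - y * z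
      - φ x * x / y + μy + z + α * z * y - μz * z - y + μz
      + σx ^ 2 / 2 + σy ^ 2 / 2 + σz ^ 2 / 2
    ≤ (2 * max 1 β) * ((x - 1 - Real.log x) + (y - 1 - Real.log y) + (z - 1 - Real.log z))
      + (6 * max 1 β + (σx ^ 2 + σy ^ 2 + σz ^ 2) / 2 + μx + μy + μz + 1) := by
  set M := max 1 β
  have hM : 0 ≤ M := zero_le_one.trans (le_max_left 1 β)
  have drift : β * y - φ x * x - μx * x - β * y / x + φ x + μx + φ x * x - μy * y - y * z
      - φ x * x / y + μy + z + α * z * y - μz * z - y + μz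
      + σx ^ 2 / 2 + σy ^ 2 / 2 + σz ^ 2 / 2
      ≤ M * y + M * z + 1 + μx + μy + μz + (σx ^ 2 + σy ^ 2 + σz ^ 2) / 2 := by
    have : 0 ≤ β * y / x := by positivity
    have : 0 ≤ φ x * x / y := div_nonneg (mul_nonneg (hφ0 x) hx.le) hy.le
    have : α * z * y ≤ y * z := by nlinarith [hα.2, mul_pos hy hz]
    have : β * y ≤ M * y := mul_le_mul_of_nonneg_right (le_max_right 1 β) hy.le
    have : z ≤ M * z := le_mul_of_one_le_left hz.le (le_max_left 1 β)
    linarith [hφ1 x, mul_pos hμx hx, mul_pos hμy hy, mul_pos hμz hz]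
  have hVx := mul_nonneg (mul_nonneg zero_le_two hM) (lyapunov_nonneg hx)
  have hVy := mul_le_two_mul_mul_lyapunov_add hM hy
  have hVz := mul_le_two_mul_mul_lyapunov_add hM hz
  unfold lyapunov at hVx hVy hVz
  linarith

theorem stmt_2 (β μx μy μz σx σy σz α : ℝ)
    (hβ : 0 < β) (hμx : 0 < μx) (hμy : 0 < μy) (hμz : 0 < μz)
    (hσx : 0 < σx) (hσy : 0 < σy) (hσz : 0 < σz)
    (hα : α ∈ Set.Ioo (0 : ℝ) 1)
    (φ : ℝ → ℝ) (hφ0 : ∀ x, 0 ≤ φ x) (hφ1 : ∀ x, φ x ≤ 1)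
    (x y z : ℝ) (hx : 0 < x) (hy : 0 < y) (hz : 0 < z) :
    β * y - φ x * x - μx * x - β * y / x + φ x + μx + φ x * x - μy * y - y * z
      - φ x * x / y + μy + z + α * z * y - μz * z - y + μz
      + σx ^ 2 / 2 + σy ^ 2 / 2 + σz ^ 2 / 2
    ≤ (2 * max 1 β) * ((x - 1 - Real.log x) + (y - 1 - Real.log y) + (z - 1 - Real.log z))
      + (6 * max 1 β + (σx ^ 2 + σy ^ 2 + σz ^ 2) / 2 + μx + μy + μz + 1) :=
  stmt_2_general β μx μy μz σx σy σz α hβ hμx hμy hμz hα φ hφ0 hφ1 x y z hx hy hz
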